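/- arXiv:math/0407204 — 2 statements merged into one kernel-verified Lean document; each statement's English description precedes it below -/
import Mathlib

section
/- Let R₁, R₂ be commutative rings each equipped with a power structure defined via a family a ↦ (1-t)^{-a} as above, and let φ : R₁ → R₂ be a ring homomorphism satisfying (1-t)^{-φ(a)} = φ((1-t)^{-a}) (applying φ coefficientwise). Then φ(A(t)^m) = (φ(A(t)))^{φ(m)} for all A(t) ∈ 1 + t·R₁[[t]] and m ∈ R₁. -/
/-- Substitution `t ↦ t^k` in a formal power series. -/
noncomputable def substPow {R : Type*} [CommRing R] (k : ℕ) (A : PowerSeries R) :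
    PowerSeries R :=
  PowerSeries.mk fun n => if k ∣ n then PowerSeries.coeff (n / k) A else 0

/-- The infinite product `∏_{i ≥ 1} f i`, well defined (coefficientwise) whenever
`f i ≡ 1 mod t^i`. -/
noncomputable def infProd {R : Type*} [CommRing R] (f : ℕ → PowerSeries R) : PowerSeries R :=
  PowerSeries.mk fun n => PowerSeries.coeff n (∏ i ∈ Finset.Icc 1 n, f i)

/-- The power structure: given the family `E a = (1-t)^{-a}` and the exponents `a i` of the
unique decomposition `A(t) = ∏_{i≥1} (1-t^i)^{-a_i}`, the series
`A(t)^m := ∏_{i≥1} (1-t^i)^{-a_i m}`. -/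
noncomputable def psPow {R : Type*} [CommRing R] (E : R → PowerSeries R) (a : ℕ → R)
    (m : R) : PowerSeries R :=
  infProd fun i => substPow i (E (a i * m))

lemma map_substPow {R S : Type*} [CommRing R] [CommRing S] (φ : R →+* S) (k : ℕ)
    (A : PowerSeries R) :
    PowerSeries.map φ (substPow k A) = substPow k (PowerSeries.map φ A) := by
  ext n
  simp only [substPow, PowerSeries.coeff_map, PowerSeries.coeff_mk, apply_ite φ, map_zero]

lemma map_infProd {R S : Type*} [CommRing R] [CommRing S] (φ : R →+* S) (f : ℕ → PowerSeries R) :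
    PowerSeries.map φ (infProd f) = infProd fun i => PowerSeries.map φ (f i) := by
  ext n
  simp only [infProd, PowerSeries.coeff_mk, PowerSeries.coeff_map, ← map_prod]

lemma map_infProd_substPow {R S : Type*} [CommRing R] [CommRing S] (φ : R →+* S)
    (F : ℕ → PowerSeries R) :
    PowerSeries.map φ (infProd fun i => substPow i (F i)) =
      infProd fun i => substPow i (PowerSeries.map φ (F i)) := by
  simp only [map_infProd, map_substPow]

theorem stmt6_general {R₁ R₂ : Type*} [CommRing R₁] [CommRing R₂]
    (E₁ : R₁ → PowerSeries R₁) (E₂ : R₂ → PowerSeries R₂)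
    (φ : R₁ →+* R₂)
    (hφ : ∀ a, E₂ (φ a) = PowerSeries.map φ (E₁ a))
    (A : PowerSeries R₁) (a : ℕ → R₁)
    (hA : A = infProd fun i => substPow i (E₁ (a i))) :
    (PowerSeries.map φ A = infProd fun i => substPow i (E₂ (φ (a i)))) ∧
    ∀ m : R₁, PowerSeries.map φ (psPow E₁ a m) = psPow E₂ (fun i => φ (a i)) (φ m) := by
  refine ⟨?_, fun m => ?_⟩
  · simp only [hA, map_infProd_substPow, ← hφ]
  · rw [psPow, psPow, map_infProd_substPow]
    simp only [← hφ, map_mul]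

/-- If `φ : R₁ → R₂` is a ring homomorphism compatible with the families
`a ↦ (1-t)^{-a}` (i.e. `(1-t)^{-φ(a)} = φ((1-t)^{-a})` coefficientwise), then
`φ(A(t)^m) = (φ A(t))^{φ(m)}`: the image `φ(A)` has decomposition exponents `φ(a_i)`,
and applying `φ` commutes with taking powers. -/
theorem stmt6 {R₁ R₂ : Type*} [CommRing R₁] [CommRing R₂]
    (E₁ : R₁ → PowerSeries R₁) (E₂ : R₂ → PowerSeries R₂)
    (hE₁0 : ∀ a, PowerSeries.constantCoeff (E₁ a) = 1)
    (hE₁add : ∀ a b, E₁ (a + b) = E₁ a * E₁ b)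
    (hE₁1 : ∀ a, PowerSeries.coeff 1 (E₁ a) = a)
    (hE₂0 : ∀ a, PowerSeries.constantCoeff (E₂ a) = 1)
    (hE₂add : ∀ a b, E₂ (a + b) = E₂ a * E₂ b)
    (hE₂1 : ∀ a, PowerSeries.coeff 1 (E₂ a) = a)
    (φ : R₁ →+* R₂)
    (hφ : ∀ a, E₂ (φ a) = PowerSeries.map φ (E₁ a))
    (A : PowerSeries R₁) (a : ℕ → R₁)
    (hA : A = infProd fun i => substPow i (E₁ (a i))) :
    (PowerSeries.map φ A = infProd fun i => substPow i (E₂ (φ (a i)))) ∧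
    ∀ m : R₁, PowerSeries.map φ (psPow E₁ a m) = psPow E₂ (fun i => φ (a i)) (φ m) :=
  stmt6_general E₁ E₂ φ hφ A a hA
end

section
/- Define Exp : t·R[[t]] → 1 + t·R[[t]] by Exp(∑_{k≥1} P_k t^k) := ∏_{k≥1} (1-t^k)^{-P_k}, where the power structure on R is defined via a family a ↦ (1-t)^{-a}. Then Exp is a bijection, and it transforms addition into multiplication: Exp(f + g) = Exp(f)·Exp(g). -/
/-- `Exp(∑_{k≥1} P_k t^k) := ∏_{k≥1} (1-t^k)^{-P_k}`, defined from the family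
`a ↦ (1-t)^{-a} = E a`. -/
noncomputable def ExpMap {R : Type*} [CommRing R] (E : R → PowerSeries R)
    (f : PowerSeries R) : PowerSeries R :=
  infProd fun k => substPow k (E (PowerSeries.coeff k f))

/-!
Modulo `t^(n+1)`, the factor `(1-t^k)^{-P_k}` is `1` for `k > n` and `1 + P_n t^n` for `k = n`, so
coefficient `n` of `Exp f` is that of a finite product, equal to `P_n` plus an expression in
`P_1, …, P_{n-1}`. Multiplicativity then follows from `E (a + b) = E a * E b`, since `t ↦ t^k` is a
ring homomorphism, and bijectivity from this unitriangular shape, by recursion on `n`.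
-/

open PowerSeries

theorem dvd_prod_sub_one {M ι : Type*} [CommRing M] {a : M} (s : Finset ι) (u : ι → M)
    (h : ∀ i ∈ s, a ∣ u i - 1) : a ∣ ∏ i ∈ s, u i - 1 :=
  Finset.prod_induction u (fun x => a ∣ x - 1)
    (fun x y hx hy => by
      rw [show x * y - 1 = (x - 1) * y + (y - 1) by ring]
      exact dvd_add (dvd_mul_of_dvd_left hx y) hy)
    (by simp) h

section Triangular

variable {M : Type*} [AddCommGroup M] (F : ℕ → (ℕ → M) → M)

/-- The solution of `c n + F n c = b n` when `F n` only reads `c` below `n`. -/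
noncomputable def triangularSolve (b : ℕ → M) (n : ℕ) : M :=
  b n - F n fun i => if i < n then triangularSolve b i else 0

theorem bijective_add_of_triangular (hF : ∀ n c c', (∀ i < n, c i = c' i) → F n c = F n c') :
    Function.Bijective fun (c : ℕ → M) n => c n + F n c := by
  refine ⟨fun c c' hcc' => funext fun n => ?_, fun b => ⟨triangularSolve F b, funext fun n => ?_⟩⟩
  · induction n using Nat.strong_induction_on with
    | _ n ih =>
      have hn := congrFun hcc' n
      simp only [hF n c c' ih] at hn
      exact add_right_cancel hn
  · change triangularSolve F b n + F n (triangularSolve F b) = b n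
    rw [triangularSolve, hF n _ (triangularSolve F b) fun i hi => if_pos hi, sub_add_cancel]

end Triangular

section PowerSeries

variable {R : Type*} [CommRing R]

theorem coeff_eq_of_X_pow_dvd_sub {n m : ℕ} {f g : R⟦X⟧} (h : X ^ n ∣ f - g) (hm : m < n) :
    coeff m f = coeff m g := by
  rw [← sub_eq_zero, ← map_sub]
  exact X_pow_dvd_iff.mp h m hm

theorem X_pow_succ_dvd_infProd_sub_prod {u : ℕ → R⟦X⟧} (hu : ∀ i, X ^ i ∣ u i - 1) (n : ℕ) :
    X ^ (n + 1) ∣ infProd u - ∏ i ∈ Finset.Icc 1 n, u i := by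
  refine X_pow_dvd_iff.mpr fun m hm => ?_
  rw [map_sub, sub_eq_zero, infProd, coeff_mk]
  have htail : X ^ (m + 1) ∣ ∏ i ∈ Finset.Ico (m + 1) (n + 1), u i - 1 :=
    dvd_prod_sub_one _ _ fun i hi => (pow_dvd_pow X (Finset.mem_Ico.mp hi).1).trans (hu i)
  have hsplit : ∏ i ∈ Finset.Icc 1 n, u i =
      (∏ i ∈ Finset.Icc 1 m, u i) * ∏ i ∈ Finset.Ico (m + 1) (n + 1), u i := by
    rw [← Finset.Ico_add_one_right_eq_Icc, ← Finset.Ico_add_one_right_eq_Icc,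
      Finset.prod_Ico_consecutive _ (by omega) (by omega)]
  refine (coeff_eq_of_X_pow_dvd_sub (n := m + 1) ?_ m.lt_succ_self).symm
  rw [hsplit, ← mul_sub_one]
  exact dvd_mul_of_dvd_right htail _

theorem substPow_eq_expand {k : ℕ} (hk : k ≠ 0) (A : R⟦X⟧) : substPow k A = expand k hk A := by
  ext n
  simp [substPow, coeff_expand]

theorem constantCoeff_substPow (k : ℕ) (A : R⟦X⟧) :
    constantCoeff (substPow k A) = constantCoeff A := by
  rw [← coeff_zero_eq_constantCoeff_apply, substPow, coeff_mk, if_pos (dvd_zero k), Nat.zero_div,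
    coeff_zero_eq_constantCoeff_apply]

theorem X_pow_dvd_substPow_sub_one (k : ℕ) {A : R⟦X⟧} (hA : constantCoeff A = 1) :
    X ^ k ∣ substPow k A - 1 := by
  rcases eq_or_ne k 0 with rfl | hk
  · simp
  have hX : X ∣ A - 1 := X_dvd_iff.mpr (by simp [hA])
  simpa [substPow_eq_expand hk] using map_dvd (expand k hk) hX

theorem X_pow_succ_dvd_substPow_sub {k : ℕ} (hk : k ≠ 0) {A : R⟦X⟧} (hA : constantCoeff A = 1) :
    X ^ (k + 1) ∣ substPow k A - (1 + C (coeff 1 A) * X ^ k) := by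
  have hX2 : X ^ 2 ∣ A - (1 + C (coeff 1 A) * X) :=
    X_pow_dvd_iff.mpr fun m hm => by interval_cases m <;> simp [hA]
  have := map_dvd (expand k hk) hX2
  simp only [map_pow, map_sub, map_add, map_one, map_mul, expand_X, expand_C] at this
  rw [substPow_eq_expand hk, ← pow_mul] at *
  exact (pow_dvd_pow X (by omega)).trans this

end PowerSeries

section ExpMap

variable {R : Type*} [CommRing R] (E : R → PowerSeries R)

theorem constantCoeff_expMap (f : R⟦X⟧) : constantCoeff (ExpMap E f) = 1 := by
  simp [← coeff_zero_eq_constantCoeff_apply, ExpMap, infProd]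

variable {E}

theorem X_pow_succ_dvd_expMap_sub_prod (hE0 : ∀ a, constantCoeff (E a) = 1) (f : R⟦X⟧) (n : ℕ) :
    X ^ (n + 1) ∣ ExpMap E f - ∏ i ∈ Finset.Icc 1 n, substPow i (E (coeff i f)) :=
  X_pow_succ_dvd_infProd_sub_prod (fun i => X_pow_dvd_substPow_sub_one i (hE0 _)) n

theorem expMap_add (hE0 : ∀ a, constantCoeff (E a) = 1) (hEadd : ∀ a b, E (a + b) = E a * E b)
    (f g : R⟦X⟧) :
    ExpMap E (f + g) = ExpMap E f * ExpMap E g := by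
  ext n
  set P := fun (h : R⟦X⟧) => ∏ i ∈ Finset.Icc 1 n, substPow i (E (coeff i h))
  have hprod : P (f + g) = P f * P g := by
    rw [← Finset.prod_mul_distrib]
    refine Finset.prod_congr rfl fun i hi => ?_
    have hi0 : i ≠ 0 := Nat.one_le_iff_ne_zero.mp (Finset.mem_Icc.mp hi).1
    simp only [map_add, hEadd, substPow_eq_expand hi0, map_mul]
  have hmul : X ^ (n + 1) ∣ ExpMap E f * ExpMap E g - P f * P g := by
    rw [show ExpMap E f * ExpMap E g - P f * P g =
      ExpMap E f * (ExpMap E g - P g) + (ExpMap E f - P f) * P g by ring]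
    exact dvd_add (dvd_mul_of_dvd_right (X_pow_succ_dvd_expMap_sub_prod hE0 g n) _)
      (dvd_mul_of_dvd_left (X_pow_succ_dvd_expMap_sub_prod hE0 f n) _)
  rw [coeff_eq_of_X_pow_dvd_sub hmul n.lt_succ_self, ← hprod]
  simp [ExpMap, infProd, P]

theorem coeff_expMap (hE0 : ∀ a, constantCoeff (E a) = 1) (hE1 : ∀ a, coeff 1 (E a) = a)
    {f : R⟦X⟧} (hf : constantCoeff f = 0) (n : ℕ) : coeff n (ExpMap E f) =
      coeff n f + coeff n (∏ i ∈ Finset.Ico 1 n, substPow i (E (coeff i f))) := by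
  rcases eq_or_ne n 0 with rfl | hn
  · simp [constantCoeff_expMap, hf]
  set P := ∏ i ∈ Finset.Ico 1 n, substPow i (E (coeff i f))
  have hP : constantCoeff P = 1 := by
    simp [P, map_prod, constantCoeff_substPow, hE0]
  have hlast : X ^ (n + 1) ∣ P * substPow n (E (coeff n f)) - P * (1 + C (coeff n f) * X ^ n) := by
    have hfactor := X_pow_succ_dvd_substPow_sub hn (hE0 (coeff n f))
    rw [hE1] at hfactor
    rw [← mul_sub]
    exact dvd_mul_of_dvd_right hfactor _
  rw [ExpMap, infProd, coeff_mk, ← Finset.Ico_add_one_right_eq_Icc,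
    Finset.prod_Ico_succ_top (Nat.one_le_iff_ne_zero.mpr hn),
    coeff_eq_of_X_pow_dvd_sub hlast n.lt_succ_self]
  rw [mul_add, mul_one, mul_left_comm, map_add, coeff_C_mul, coeff_mul_X_pow', if_pos le_rfl,
    Nat.sub_self, coeff_zero_eq_constantCoeff_apply, hP, mul_one, add_comm]

theorem bijOn_expMap (hE0 : ∀ a, constantCoeff (E a) = 1) (hE1 : ∀ a, coeff 1 (E a) = a) :
    Set.BijOn (ExpMap E) {f | constantCoeff f = 0} {B | constantCoeff B = 1} := by
  set F : ℕ → (ℕ → R) → R := fun n c => coeff n (∏ i ∈ Finset.Ico 1 n, substPow i (E (c i)))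
  set T : (ℕ → R) → ℕ → R := fun c n => c n + F n c
  have hT : Function.Bijective T := bijective_add_of_triangular F fun n c c' hcc' =>
    congrArg (coeff n) (Finset.prod_congr rfl fun i hi => by rw [hcc' i (Finset.mem_Ico.mp hi).2])
  have hcoeff : ∀ f : R⟦X⟧, constantCoeff f = 0 →
      T (fun i => coeff i f) = fun n => coeff n (ExpMap E f) :=
    fun f hf => funext fun n => (coeff_expMap hE0 hE1 hf n).symm
  refine ⟨fun f _ => constantCoeff_expMap E f, fun f hf g hg hfg => ?_, fun B hB => ?_⟩
  · ext n
    have hTfg : T (fun i => coeff i f) = T (fun i => coeff i g) := by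
      rw [hcoeff f hf, hcoeff g hg, hfg]
    exact congrFun (hT.1 hTfg) n
  · obtain ⟨c, hc⟩ := hT.2 fun n => coeff n B
    have hc0 : constantCoeff (mk c) = 0 := by
      have hc0 := congrFun hc 0
      simp only [T, F, Finset.Ico_eq_empty_of_le (Nat.zero_le 1), Finset.prod_empty,
        coeff_zero_eq_constantCoeff_apply, map_one] at hc0
      rw [(hB : constantCoeff B = 1), add_eq_right] at hc0
      rwa [← coeff_zero_eq_constantCoeff_apply, coeff_mk]
    refine ⟨mk c, hc0, ext fun n => ?_⟩
    rw [← congrFun (hcoeff _ hc0) n, ← congrFun hc n]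
    simp [T]

end ExpMap

theorem stmt8_general {R : Type*} [CommRing R] (E : R → PowerSeries R)
    (hE0 : ∀ a, PowerSeries.constantCoeff (E a) = 1)
    (hEadd : ∀ a b, E (a + b) = E a * E b)
    (hE1 : ∀ a, PowerSeries.coeff 1 (E a) = a) :
    (∀ f g : PowerSeries R, PowerSeries.constantCoeff f = 0 →
      PowerSeries.constantCoeff g = 0 →
      ExpMap E (f + g) = ExpMap E f * ExpMap E g) ∧
    (∀ f : PowerSeries R, PowerSeries.constantCoeff f = 0 →
      PowerSeries.constantCoeff (ExpMap E f) = 1) ∧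
    (∀ f g : PowerSeries R, PowerSeries.constantCoeff f = 0 →
      PowerSeries.constantCoeff g = 0 → ExpMap E f = ExpMap E g → f = g) ∧
    (∀ B : PowerSeries R, PowerSeries.constantCoeff B = 1 →
      ∃ f : PowerSeries R, PowerSeries.constantCoeff f = 0 ∧ ExpMap E f = B) := by
  have hbij := bijOn_expMap hE0 hE1
  refine ⟨fun f g _ _ => expMap_add hE0 hEadd f g, fun f hf => hbij.mapsTo hf,
    fun f g hf hg => (hbij.injOn hf hg ·), fun B hB => ?_⟩
  obtain ⟨f, hf, rfl⟩ := hbij.surjOn hB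
  exact ⟨f, hf, rfl⟩

/-- `Exp` is a bijection from `t·R⟦t⟧` (series with constant term `0`) onto `1 + t·R⟦t⟧`
(series with constant term `1`), transforming addition into multiplication. -/
theorem stmt8 {R : Type*} [CommRing R] (E : R → PowerSeries R)
    (hE0 : ∀ a, PowerSeries.constantCoeff (E a) = 1)
    (hEadd : ∀ a b, E (a + b) = E a * E b)
    (hE1 : ∀ a, PowerSeries.coeff 1 (E a) = a)
    (hEone : E 1 = PowerSeries.mk fun _ => (1 : R)) :
    (∀ f g : PowerSeries R, PowerSeries.constantCoeff f = 0 →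
      PowerSeries.constantCoeff g = 0 →
      ExpMap E (f + g) = ExpMap E f * ExpMap E g) ∧
    (∀ f : PowerSeries R, PowerSeries.constantCoeff f = 0 →
      PowerSeries.constantCoeff (ExpMap E f) = 1) ∧
    (∀ f g : PowerSeries R, PowerSeries.constantCoeff f = 0 →
      PowerSeries.constantCoeff g = 0 → ExpMap E f = ExpMap E g → f = g) ∧
    (∀ B : PowerSeries R, PowerSeries.constantCoeff B = 1 →
      ∃ f : PowerSeries R, PowerSeries.constantCoeff f = 0 ∧ ExpMap E f = B) :=
  stmt8_general E hE0 hEadd hE1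
end
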